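/- Let P ⊆ ℝ^n be a nonempty compact set, I ⊆ {1,…,n}, and Q ⊆ ℝ^n a finite set such that sup_{x∈P} f(x) = sup_{x∈Q} f(x) for every function f : ℝ^n → ℝ that is convex in x_I. For x̄ in the projection of P onto the coordinates outside I, define P(x̄) = P ∩ {x ∈ ℝ^n : x_i = x̄_i for all i ∉ I} and Q(x̄) = Q ∩ {x ∈ ℝ^n : x_i = x̄_i for all i ∉ I}. Then conv(P(x̄)) = conv(Q(x̄)) for every such x̄. -/

import Mathlib

open Set

/-- `f : ℝⁿ → ℝ` is *convex in the coordinates `I`*: for every fixed assignment `xb` of the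
coordinates outside `I`, the restriction of `f` to the corresponding affine slice is convex. -/
def ConvexIn {n : ℕ} (I : Set (Fin n)) (f : (Fin n → ℝ) → ℝ) : Prop :=
  ∀ xb : Fin n → ℝ, ConvexOn ℝ {x : Fin n → ℝ | ∀ i ∉ I, x i = xb i} f


lemma myIsCompact_convexHull {n : ℕ} {s : Set (Fin n → ℝ)} (hs : IsCompact s) :
    IsCompact (convexHull ℝ s) := by
  classical
  rcases s.eq_empty_or_nonempty with rfl | ⟨x0, hx0⟩
  · simp
  · have hD : IsCompact ((stdSimplex ℝ (Fin (n+1))) ×ˢ (Set.univ.pi fun _ : Fin (n+1) => s)) :=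
      (isCompact_stdSimplex (𝕜 := ℝ) (ι := Fin (n+1))).prod (isCompact_univ_pi fun _ => hs)
    set g : ((Fin (n+1) → ℝ) × (Fin (n+1) → Fin n → ℝ)) → (Fin n → ℝ) :=
      fun p => ∑ i, p.1 i • p.2 i with hgdef
    have hg : Continuous g := continuous_finset_sum _ fun i _ =>
      ((continuous_apply i).comp continuous_fst).smul ((continuous_apply i).comp continuous_snd)
    have heq : convexHull ℝ s
        = g '' ((stdSimplex ℝ (Fin (n+1))) ×ˢ (Set.univ.pi fun _ : Fin (n+1) => s)) := by
      apply Subset.antisymm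
      · intro x hx
        obtain ⟨ι, hι, z, w, hzs, hai, hw0, hw1, hxw⟩ := eq_pos_convex_span_of_mem_convexHull hx
        have hcard : Fintype.card ι ≤ n + 1 := by
          calc Fintype.card ι ≤ Module.finrank ℝ (vectorSpan ℝ (range z)) + 1 :=
                hai.card_le_finrank_succ
            _ ≤ Module.finrank ℝ (Fin n → ℝ) + 1 :=
                Nat.add_le_add_right (Submodule.finrank_le _) 1
            _ = n + 1 := by simp
        obtain ⟨e⟩ : Nonempty (ι ↪ Fin (n+1)) := by
          apply Function.Embedding.nonempty_of_card_le
          simpa using hcard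
        let w' : Fin (n+1) → ℝ := Function.extend e w 0
        let z' : Fin (n+1) → Fin n → ℝ := Function.extend e z (fun _ => x0)
        have hwe : ∀ i, w' (e i) = w i := fun i => e.injective.extend_apply w 0 i
        have hze : ∀ i, z' (e i) = z i := fun i => e.injective.extend_apply z (fun _ => x0) i
        have hwo : ∀ j, (¬ ∃ i, e i = j) → w' j = 0 := fun j hj => Function.extend_apply' w (0 : Fin (n+1) → ℝ) j hj
        have hzo : ∀ j, (¬ ∃ i, e i = j) → z' j = x0 :=
          fun j hj => Function.extend_apply' z (fun _ => x0) j hj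
        have key : ∀ (M : Type) [AddCommMonoid M] (φ : ℝ → (Fin n → ℝ) → M), (∀ v, φ 0 v = 0) →
            ∑ j, φ (w' j) (z' j) = ∑ i, φ (w i) (z i) := by
          intro M _ φ h0
          have h1 : ∑ j ∈ Finset.univ.map e, φ (w' j) (z' j) = ∑ j, φ (w' j) (z' j) := by
            refine Finset.sum_subset (Finset.subset_univ _) ?_
            intro j _ hj
            have hj' : ¬ ∃ i, e i = j := by
              intro ⟨i, hi⟩
              exact hj (Finset.mem_map.2 ⟨i, Finset.mem_univ i, hi⟩)
            rw [hwo j hj', h0]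
          rw [← h1, Finset.sum_map]
          exact Finset.sum_congr rfl fun i _ => by rw [hwe, hze]
        refine ⟨(w', z'), ⟨⟨?_, ?_⟩, ?_⟩, ?_⟩
        · intro j
          show 0 ≤ w' j
          by_cases hj : ∃ i, e i = j
          · obtain ⟨i, rfl⟩ := hj
            rw [hwe]; exact (hw0 i).le
          · rw [hwo j hj]
        · show ∑ j, w' j = 1
          have := key ℝ (fun a _ => a) (fun _ => rfl)
          simpa [hw1] using this
        · intro j _
          show z' j ∈ s
          by_cases hj : ∃ i, e i = j
          · obtain ⟨i, rfl⟩ := hj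
            rw [hze]; exact hzs ⟨i, rfl⟩
          · rw [hzo j hj]; exact hx0
        · show ∑ j, w' j • z' j = x
          rw [key (Fin n → ℝ) (fun a v => a • v) (fun v => zero_smul ℝ v), hxw]
      · rintro _ ⟨⟨w, z⟩, ⟨hw, hz⟩, rfl⟩
        exact mem_convexHull_of_exists_fintype w z hw.1 hw.2 (fun i => hz i (mem_univ i)) rfl
    rw [heq]
    exact hD.image hg

lemma slice_convex {n : ℕ} (I : Set (Fin n)) (xb : Fin n → ℝ) :
    Convex ℝ {x : Fin n → ℝ | ∀ i ∉ I, x i = xb i} := by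
  intro x hx y hy a b ha hb hab i hi
  have : (a • x + b • y) i = a * x i + b * y i := rfl
  rw [this, hx i hi, hy i hi, ← add_mul, hab, one_mul]

lemma slice_closed {n : ℕ} (I : Set (Fin n)) (xb : Fin n → ℝ) :
    IsClosed {x : Fin n → ℝ | ∀ i ∉ I, x i = xb i} := by
  have : {x : Fin n → ℝ | ∀ i ∉ I, x i = xb i}
      = ⋂ i, ⋂ (_ : i ∉ I), {x : Fin n → ℝ | x i = xb i} := by
    ext x; simp
  rw [this]
  exact isClosed_iInter fun i => isClosed_iInter fun _ =>
    isClosed_eq (continuous_apply i) continuous_const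

lemma sep_aux {n : ℕ} {I : Set (Fin n)} {A B : Set (Fin n → ℝ)} (hBne : B.Nonempty)
    (hbA : ∀ ℓ : (Fin n → ℝ) →L[ℝ] ℝ, BddAbove (ℓ '' A))
    (hbB : ∀ ℓ : (Fin n → ℝ) →L[ℝ] ℝ, BddAbove (ℓ '' B))
    (hsup : ∀ f : (Fin n → ℝ) → ℝ, ConvexIn I f → sSup (f '' A) = sSup (f '' B))
    {xb : Fin n → ℝ} (hcl : IsClosed (convexHull ℝ {x ∈ B | ∀ i ∉ I, x i = xb i}))
    {z : Fin n → ℝ} (hzA : z ∈ A) (hz : ∀ i ∉ I, z i = xb i) :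
    z ∈ convexHull ℝ {x ∈ B | ∀ i ∉ I, x i = xb i} := by
  classical
  by_contra hznot
  obtain ⟨ℓ, u, hu1, hu2⟩ :=
    geometric_hahn_banach_closed_point (convex_convexHull ℝ _) hcl hznot
  obtain ⟨CA, hCA⟩ := hbA ℓ
  obtain ⟨CB, hCB⟩ := hbB ℓ
  set M : ℝ := max 0 (CB - u) + 1 with hMdef
  have hM0 : 0 < M := by positivity
  set f : (Fin n → ℝ) → ℝ :=
    fun x => ℓ x + (if ∀ i ∉ I, x i = xb i then 0 else -M) with hfdef
  have hconv : ConvexIn I f := by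
    intro yb
    refine ⟨slice_convex I yb, ?_⟩
    intro x hx y hy a b ha hb hab
    have hcong : ∀ v : Fin n → ℝ, (∀ i ∉ I, v i = yb i) →
        (if ∀ i ∉ I, v i = xb i then (0:ℝ) else -M)
          = (if ∀ i ∉ I, yb i = xb i then (0:ℝ) else -M) := by
      intro v hv
      have : (∀ i ∉ I, v i = xb i) ↔ (∀ i ∉ I, yb i = xb i) := by
        constructor <;> intro h i hi
        · rw [← hv i hi]; exact h i hi
        · rw [hv i hi]; exact h i hi
      exact if_congr this rfl rfl
    have hxy : ∀ i ∉ I, (a • x + b • y) i = yb i :=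
      slice_convex I yb hx hy ha hb hab
    have e1 := hcong x hx
    have e2 := hcong y hy
    have e3 := hcong _ hxy
    have hl : ℓ (a • x + b • y) = a * ℓ x + b * ℓ y := by
      rw [map_add, map_smul, map_smul]; rfl
    simp only [hfdef, e1, e2, e3, hl, smul_eq_mul]
    set k : ℝ := if ∀ i ∉ I, yb i = xb i then (0:ℝ) else -M with hk
    refine le_of_eq ?_
    linear_combination k * hab.symm
  have key := hsup f hconv
  have hfzA : f z = ℓ z := by
    simp only [hfdef, if_pos hz, add_zero]
  have hAbdd : BddAbove (f '' A) := by
    refine ⟨CA, ?_⟩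
    rintro _ ⟨y, hy, rfl⟩
    have h1 : ℓ y ≤ CA := hCA ⟨y, hy, rfl⟩
    by_cases hys : ∀ i ∉ I, y i = xb i
    · simp only [hfdef, if_pos hys, add_zero]; exact h1
    · simp only [hfdef, if_neg hys]; linarith
  have hA : ℓ z ≤ sSup (f '' A) := by
    rw [← hfzA]
    exact le_csSup hAbdd (mem_image_of_mem f hzA)
  have hB : sSup (f '' B) ≤ u := by
    refine csSup_le (hBne.image f) ?_
    rintro _ ⟨y, hy, rfl⟩
    by_cases hys : ∀ i ∉ I, y i = xb i
    · have : ℓ y < u := hu1 y (subset_convexHull ℝ _ ⟨hy, hys⟩)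
      simp only [hfdef, if_pos hys, add_zero]
      exact this.le
    · have h1 : ℓ y ≤ CB := hCB ⟨y, hy, rfl⟩
      have h2 : CB - u ≤ max 0 (CB - u) := le_max_right _ _
      simp only [hfdef, if_neg hys]
      linarith
  rw [key] at hA
  linarith
/-- If a nonempty compact set `P ⊆ ℝⁿ` shares its supremum with a finite set `Q` for every
function convex in `x_I`, then for every `x̄` in the projection of `P` onto the coordinates
outside `I` (i.e. every `xb` agreeing outside `I` with some point of `P`), the convex hulls
of the slices `P(x̄) = P ∩ {x : xᵢ = x̄ᵢ ∀ i ∉ I}` and `Q(x̄) = Q ∩ {x : xᵢ = x̄ᵢ ∀ i ∉ I}`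
coincide. -/

theorem stmt_6 {n : ℕ} (P : Set (Fin n → ℝ)) (hPne : P.Nonempty) (hPcomp : IsCompact P)
    (I : Set (Fin n)) (Q : Set (Fin n → ℝ)) (hQfin : Q.Finite)
    (hsup : ∀ f : (Fin n → ℝ) → ℝ, ConvexIn I f → sSup (f '' P) = sSup (f '' Q)) :
    ∀ xb : Fin n → ℝ, (∃ p ∈ P, ∀ i ∉ I, p i = xb i) →
      convexHull ℝ {x ∈ P | ∀ i ∉ I, x i = xb i}
        = convexHull ℝ {x ∈ Q | ∀ i ∉ I, x i = xb i} := by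
  classical
  rintro xb ⟨p, hpP, hpx⟩
  rcases Q.eq_empty_or_nonempty with rfl | hQne
  · exfalso
    have hconst : ConvexIn I (fun _ => (1:ℝ)) :=
      fun yb => convexOn_const 1 (slice_convex I yb)
    have h := hsup (fun _ => (1:ℝ)) hconst
    rw [hPne.image_const, Set.image_empty] at h
    simp [Real.sSup_empty] at h
  · have hbP : ∀ ℓ : (Fin n → ℝ) →L[ℝ] ℝ, BddAbove (ℓ '' P) :=
      fun ℓ => (hPcomp.image ℓ.continuous).bddAbove
    have hbQ : ∀ ℓ : (Fin n → ℝ) →L[ℝ] ℝ, BddAbove (ℓ '' Q) :=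
      fun ℓ => (hQfin.image ℓ).bddAbove
    have hQcl : IsClosed (convexHull ℝ {x ∈ Q | ∀ i ∉ I, x i = xb i}) :=
      ((hQfin.subset (sep_subset _ _)).isCompact_convexHull (𝕜 := ℝ)).isClosed
    have hPcl : IsClosed (convexHull ℝ {x ∈ P | ∀ i ∉ I, x i = xb i}) := by
      have hsl : IsCompact {x ∈ P | ∀ i ∉ I, x i = xb i} := by
        have : {x ∈ P | ∀ i ∉ I, x i = xb i} = P ∩ {x | ∀ i ∉ I, x i = xb i} := rfl
        rw [this]
        exact hPcomp.inter_right (slice_closed I xb)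
      exact (myIsCompact_convexHull hsl).isClosed
    apply Subset.antisymm
    · exact convexHull_min
        (fun z hz => sep_aux hQne hbP hbQ hsup hQcl hz.1 hz.2) (convex_convexHull ℝ _)
    · exact convexHull_min
        (fun z hz => sep_aux hPne hbQ hbP (fun f hf => (hsup f hf).symm) hPcl hz.1 hz.2)
        (convex_convexHull ℝ _)
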